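/- Suppose M has unique left inverses and A is a DTSM deterministic M-automaton over X accepting the normal subgroup Q ⊆ F. Let J ⊆ X* be the set of words w such that (m, w) labels a path in A from some terminal state to some terminal state for some m ∈ M, and let K = { w̄Q : w ∈ J } ⊆ F/Q. Then K is a subgroup of F/Q, and the index of K in F/Q is at most the number of states of A. -/

import Mathlib

/-- A monoid `M` has *unique left inverses* if whenever `b * a = 1 = c * a` we have `b = c`. -/
def UniqueLeftInverses (M : Type) [Monoid M] : Prop :=
  ∀ a b c : M, b * a = 1 → c * a = 1 → b = c

/-- The word problem of a group `H`, generated as a monoid by the image of `φ : X → H`,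
is the set of words over `X` representing the identity of `H`. -/
def wordProblem {H : Type} [Group H] {X : Type} (φ : X → H) : Set (List X) :=
  {w | (w.map φ).prod = 1}

/-- A deterministic `M`-automaton over the alphabet `X`: a finite directed graph with
a distinguished initial state, a set of terminal states, and edges labelled by pairs in
`M × X`, such that each state has at most one outgoing edge per letter of `X`. -/
structure DetMAutomaton (M : Type) [Monoid M] (X : Type) where
  State : Type
  [stateFintype : Fintype State]
  init : State
  terminal : Set State
  edge : State → M × X → State → Prop
  det : ∀ ⦃p : State⦄ ⦃x : X⦄ ⦃g h : M⦄ ⦃q r : State⦄,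
      edge p (g, x) q → edge p (h, x) r → g = h ∧ q = r

namespace DetMAutomaton

variable {M : Type} [Monoid M] {X : Type}

/-- `A.Path p m w q` means there is a path from `p` to `q` labelled `(m, w)`: the
`X`-components of its edge labels spell out `w` in order, and the `M`-components
multiply in order to `m`. -/
inductive Path (A : DetMAutomaton M X) : A.State → M → List X → A.State → Prop
  | nil (p : A.State) : Path A p 1 [] p
  | cons {p q r : A.State} {g h : M} {x : X} {w : List X} :
      A.edge p (g, x) q → Path A q h w r → Path A p (g * h) (x :: w) r

/-- The language accepted by a deterministic `M`-automaton: all words `w` such that some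
path labelled `(1, w)` leads from the initial state to a terminal state. -/
def Lang (A : DetMAutomaton M X) : Set (List X) :=
  {w | ∃ q ∈ A.terminal, A.Path A.init 1 w q}

/-- A deterministic `M`-automaton is *deterministic terminal state minimal* (DTSM) if no
deterministic `M`-automaton accepting the same language has strictly fewer terminal states. -/
def DTSM (A : DetMAutomaton M X) : Prop :=
  ∀ B : DetMAutomaton M X, B.Lang = A.Lang → Nat.card A.terminal ≤ Nat.card B.terminal

end DetMAutomaton

/-!
Minimality forces every terminal state to be reachable along a path labelled `(1, u)`, both
from the initial state and from any other terminal state (otherwise the unreachable terminal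
states could be dropped without changing the language). Since `A` accepts the subgroup `Q`,
this lets one glue and reverse paths between terminal states, so their labels form a subgroup
`K` of `F ⧸ Q`. If words representing `g⁻¹` and `g'⁻¹` lead from the initial state to the same
state, then completing both by a common word to elements of `Q` produces a path between
terminal states labelled by `g⁻¹ g'`; hence the state reached by `g⁻¹` determines the coset
`gK`, and the index of `K` is at most the number of states.
-/

theorem Subgroup.index_ne_zero_and_le_natCard_of_inv_mul_mem {G S : Type*} [Group G]
    [Finite S] (K : Subgroup G) (f : G → S) (hf : ∀ g g', f g = f g' → g⁻¹ * g' ∈ K) :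
    K.index ≠ 0 ∧ K.index ≤ Nat.card S := by
  have hinj : Function.Injective fun c : G ⧸ K => f c.out := by
    intro c c' h
    rw [← QuotientGroup.out_eq' c, ← QuotientGroup.out_eq' c']
    exact QuotientGroup.eq.2 (hf _ _ h)
  have : Finite (G ⧸ K) := Finite.of_injective _ hinj
  exact ⟨index_ne_zero_of_finite, Nat.card_le_card_of_injective _ hinj⟩

namespace DetMAutomaton

attribute [instance] stateFintype

variable {M : Type} [Monoid M] {X : Type} {A : DetMAutomaton M X}

theorem Path.eq_of_nil {p q : A.State} {m : M} (h : A.Path p m [] q) : p = q ∧ m = 1 := by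
  cases h
  exact ⟨rfl, rfl⟩

theorem Path.append {p q r : A.State} {m₁ m₂ : M} {w₁ w₂ : List X}
    (h₁ : A.Path p m₁ w₁ q) (h₂ : A.Path q m₂ w₂ r) : A.Path p (m₁ * m₂) (w₁ ++ w₂) r := by
  induction h₁ with
  | nil => simpa using h₂
  | cons e _ ih => rw [mul_assoc]; exact .cons e (ih h₂)

theorem Path.exists_of_append {p r : A.State} {m : M} {w₁ w₂ : List X}
    (h : A.Path p m (w₁ ++ w₂) r) :
    ∃ q m₁ m₂, A.Path p m₁ w₁ q ∧ A.Path q m₂ w₂ r ∧ m = m₁ * m₂ := by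
  induction w₁ generalizing p m with
  | nil => exact ⟨p, 1, m, .nil p, h, (one_mul m).symm⟩
  | cons x w₁ ih =>
    cases h with
    | cons e h =>
      obtain ⟨q, m₁, m₂, h₁, h₂, rfl⟩ := ih h
      exact ⟨q, _, m₂, .cons e h₁, h₂, (mul_assoc _ _ _).symm⟩

theorem Path.unique {p q q' : A.State} {m m' : M} {w : List X}
    (h : A.Path p m w q) (h' : A.Path p m' w q') : m = m' ∧ q = q' := by
  induction h generalizing m' q' with
  | nil => exact ⟨h'.eq_of_nil.2.symm, h'.eq_of_nil.1⟩
  | cons e _ ih =>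
    cases h' with
    | cons e' h' =>
      obtain ⟨rfl, rfl⟩ := A.det e e'
      obtain ⟨rfl, rfl⟩ := ih h'
      exact ⟨rfl, rfl⟩

theorem init_mem_terminal_of_nil_mem_lang (h : [] ∈ A.Lang) : A.init ∈ A.terminal := by
  obtain ⟨q, hq, hp⟩ := h
  exact hp.eq_of_nil.1 ▸ hq

theorem exists_path_of_append_mem_lang {w v : List X} (h : w ++ v ∈ A.Lang) :
    ∃ m s, A.Path A.init m w s := by
  obtain ⟨_, _, hp⟩ := h
  obtain ⟨s, m, -, hw, -⟩ := hp.exists_of_append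
  exact ⟨m, s, hw⟩

theorem exists_path_terminal_of_append_mem_lang {w v : List X} {m : M} {s : A.State}
    (hs : A.Path A.init m w s) (h : w ++ v ∈ A.Lang) :
    ∃ n, ∃ q ∈ A.terminal, A.Path s n v q ∧ m * n = 1 := by
  obtain ⟨q, hq, hp⟩ := h
  obtain ⟨s', m', n, hw, hv, hmn⟩ := hp.exists_of_append
  obtain ⟨rfl, rfl⟩ := hs.unique hw
  exact ⟨n, q, hq, hv, hmn.symm⟩

def reinit (A : DetMAutomaton M X) (i : A.State) (T : Set A.State) : DetMAutomaton M X :=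
  { A with init := i, terminal := T }

theorem path_reinit_iff {i : A.State} {T : Set A.State} {p q : A.State} {m : M}
    {w : List X} : (A.reinit i T).Path p m w q ↔ A.Path p m w q := by
  constructor
  · intro h
    exact Path.rec (A := A.reinit i T) (motive := fun p m w q _ => A.Path p m w q)
      (fun p => Path.nil (A := A) p) (fun e _ ih => Path.cons (A := A) e ih) h
  · intro h
    exact Path.rec (A := A) (motive := fun p m w q _ => (A.reinit i T).Path p m w q)
      (fun p => Path.nil (A := A.reinit i T) p)
      (fun e _ ih => Path.cons (A := A.reinit i T) e ih) h

theorem lang_reinit (i : A.State) (T : Set A.State) :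
    (A.reinit i T).Lang = {w | ∃ q ∈ T, A.Path i 1 w q} := by
  ext w
  exact ⟨fun ⟨q, hq, h⟩ => ⟨q, hq, path_reinit_iff.1 h⟩,
    fun ⟨q, hq, h⟩ => ⟨q, hq, path_reinit_iff.2 h⟩⟩

theorem DTSM.exists_path_of_mem_terminal (hmin : A.DTSM) {i : A.State}
    (hi : (A.reinit i A.terminal).Lang = A.Lang) {t : A.State} (ht : t ∈ A.terminal) :
    ∃ u, A.Path i 1 u t := by
  set T := {t ∈ A.terminal | ∃ u, A.Path i 1 u t}
  have hT : (A.reinit i T).Lang = A.Lang := by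
    rw [← hi, lang_reinit, lang_reinit]
    ext w
    exact ⟨fun ⟨q, hq, h⟩ => ⟨q, hq.1, h⟩, fun ⟨q, hq, h⟩ => ⟨q, ⟨hq, w, h⟩, h⟩⟩
  have hcard : Nat.card A.terminal ≤ Nat.card T := hmin _ hT
  rw [Nat.card_coe_set_eq, Nat.card_coe_set_eq] at hcard
  have : T = A.terminal := Set.eq_of_subset_of_ncard_le (fun _ h => h.1) hcard
  exact (this ▸ ht : t ∈ T).2

def terminalPathWords (A : DetMAutomaton M X) : Set (List X) :=
  {w | ∃ m : M, ∃ p ∈ A.terminal, ∃ r ∈ A.terminal, A.Path p m w r}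

def terminalPathClasses {F : Type} [Group F] (A : DetMAutomaton M X) (ι : X → F)
    (Q : Subgroup F) : Set (F ⧸ Q) :=
  (fun w : List X => ((w.map ι).prod : F ⧸ Q)) '' A.terminalPathWords

section AcceptsSubgroup

variable {F : Type} [Group F] {ι : X → F} {Q : Subgroup F}

theorem mem_lang_iff (hacc : A.Lang = {w : List X | (w.map ι).prod ∈ Q}) {w : List X} :
    w ∈ A.Lang ↔ (w.map ι).prod ∈ Q := by
  rw [hacc]
  rfl

theorem init_mem_terminal (hacc : A.Lang = {w : List X | (w.map ι).prod ∈ Q}) :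
    A.init ∈ A.terminal :=
  init_mem_terminal_of_nil_mem_lang ((mem_lang_iff hacc).2 (by simp [Q.one_mem]))

theorem exists_path_init (hgen : ∀ f : F, ∃ w : List X, (w.map ι).prod = f)
    (hacc : A.Lang = {w : List X | (w.map ι).prod ∈ Q}) (w : List X) :
    ∃ m s, A.Path A.init m w s := by
  obtain ⟨v, hv⟩ := hgen (w.map ι).prod⁻¹
  refine exists_path_of_append_mem_lang (v := v) ((mem_lang_iff hacc).2 ?_)
  simp [hv, Q.one_mem]

theorem lang_reinit_of_mem_terminal (hacc : A.Lang = {w : List X | (w.map ι).prod ∈ Q})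
    (hmin : A.DTSM) {t : A.State} (ht : t ∈ A.terminal) :
    (A.reinit t A.terminal).Lang = A.Lang := by
  obtain ⟨u, hu⟩ := hmin.exists_path_of_mem_terminal (lang_reinit _ _) ht
  have huQ : (u.map ι).prod ∈ Q := (mem_lang_iff hacc).1 ⟨t, ht, hu⟩
  ext w
  rw [lang_reinit, Set.mem_ofPred_eq, mem_lang_iff hacc]
  constructor
  · rintro ⟨q, hq, hw⟩
    have huw := (mem_lang_iff hacc).1 ⟨q, hq, one_mul (1 : M) ▸ hu.append hw⟩
    rw [List.map_append, List.prod_append] at huw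
    exact (Q.mul_mem_cancel_left huQ).1 huw
  · intro hw
    have huw : u ++ w ∈ A.Lang := by
      rw [mem_lang_iff hacc, List.map_append, List.prod_append]
      exact Q.mul_mem huQ hw
    obtain ⟨n, q, hq, hp, hn⟩ := exists_path_terminal_of_append_mem_lang hu huw
    rw [one_mul] at hn
    exact ⟨q, hq, hn ▸ hp⟩

theorem exists_path_between_terminals (hacc : A.Lang = {w : List X | (w.map ι).prod ∈ Q})
    (hmin : A.DTSM) {t t' : A.State} (ht : t ∈ A.terminal) (ht' : t' ∈ A.terminal) :
    ∃ c, A.Path t 1 c t' ∧ (c.map ι).prod ∈ Q := by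
  have hL := lang_reinit_of_mem_terminal hacc hmin ht
  obtain ⟨c, hc⟩ := hmin.exists_path_of_mem_terminal hL ht'
  refine ⟨c, hc, (mem_lang_iff hacc).1 ?_⟩
  rw [← hL, lang_reinit]
  exact ⟨t', ht', hc⟩

variable [Q.Normal]

theorem one_mem_terminalPathClasses (hacc : A.Lang = {w : List X | (w.map ι).prod ∈ Q}) :
    1 ∈ A.terminalPathClasses ι Q :=
  ⟨[], ⟨1, A.init, init_mem_terminal hacc, A.init, init_mem_terminal hacc, .nil _⟩, by simp⟩

theorem mul_mem_terminalPathClasses (hacc : A.Lang = {w : List X | (w.map ι).prod ∈ Q})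
    (hmin : A.DTSM) {x y : F ⧸ Q} (hx : x ∈ A.terminalPathClasses ι Q)
    (hy : y ∈ A.terminalPathClasses ι Q) : x * y ∈ A.terminalPathClasses ι Q := by
  obtain ⟨w₁, ⟨m₁, p₁, hp₁, r₁, hr₁, h₁⟩, rfl⟩ := hx
  obtain ⟨w₂, ⟨m₂, p₂, hp₂, r₂, hr₂, h₂⟩, rfl⟩ := hy
  obtain ⟨c, hc, hcQ⟩ := exists_path_between_terminals hacc hmin hr₁ hp₂
  refine ⟨w₁ ++ c ++ w₂, ⟨_, p₁, hp₁, r₂, hr₂, (h₁.append hc).append h₂⟩, ?_⟩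
  simp [(QuotientGroup.eq_one_iff _).2 hcQ]

theorem inv_mem_terminalPathClasses (hgen : ∀ f : F, ∃ w : List X, (w.map ι).prod = f)
    (hacc : A.Lang = {w : List X | (w.map ι).prod ∈ Q}) (hmin : A.DTSM) {x : F ⧸ Q}
    (hx : x ∈ A.terminalPathClasses ι Q) : x⁻¹ ∈ A.terminalPathClasses ι Q := by
  obtain ⟨w, ⟨m, p, hp, r, hr, h⟩, rfl⟩ := hx
  obtain ⟨u, hu⟩ := hmin.exists_path_of_mem_terminal (lang_reinit _ _) hp
  have huQ := (mem_lang_iff hacc).1 ⟨p, hp, hu⟩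
  obtain ⟨v, hv⟩ := hgen (w.map ι).prod⁻¹
  have huwv : u ++ w ++ v ∈ A.Lang := by
    rw [mem_lang_iff hacc]
    simpa [hv] using huQ
  obtain ⟨n, q, hq, hv', -⟩ := exists_path_terminal_of_append_mem_lang (hu.append h) huwv
  exact ⟨v, ⟨n, r, hr, q, hq, hv'⟩, by simp [hv]⟩

theorem mul_inv_mem_terminalPathClasses_of_paths_to_same_state
    (hgen : ∀ f : F, ∃ w : List X, (w.map ι).prod = f)
    (hacc : A.Lang = {w : List X | (w.map ι).prod ∈ Q}) {w w' : List X} {m m' : M}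
    {s : A.State} (h : A.Path A.init m w s) (h' : A.Path A.init m' w' s) :
    ((w.map ι).prod : F ⧸ Q) * ((w'.map ι).prod : F ⧸ Q)⁻¹ ∈ A.terminalPathClasses ι Q := by
  obtain ⟨v, hv⟩ := hgen (w.map ι).prod⁻¹
  obtain ⟨z, hz⟩ := hgen ((w.map ι).prod * (w'.map ι).prod⁻¹)
  have hwv : w ++ v ∈ A.Lang := by
    rw [mem_lang_iff hacc]
    simp [hv, Q.one_mem]
  have hw'vz : w' ++ (v ++ z) ∈ A.Lang := by
    rw [mem_lang_iff hacc]
    simp [hv, hz, Q.one_mem]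
  obtain ⟨_, e, he, hve, -⟩ := exists_path_terminal_of_append_mem_lang h hwv
  obtain ⟨_, e', he', hvz, -⟩ := exists_path_terminal_of_append_mem_lang h' hw'vz
  obtain ⟨t, _, n, hvt, hz', -⟩ := hvz.exists_of_append
  obtain ⟨-, rfl⟩ := hve.unique hvt
  exact ⟨z, ⟨n, e, he, e', he', hz'⟩, by simp [hz]⟩

theorem index_ne_zero_and_le_card_state (hgen : ∀ f : F, ∃ w : List X, (w.map ι).prod = f)
    (hacc : A.Lang = {w : List X | (w.map ι).prod ∈ Q}) (K : Subgroup (F ⧸ Q))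
    (hK : (K : Set (F ⧸ Q)) = A.terminalPathClasses ι Q) :
    K.index ≠ 0 ∧ K.index ≤ Nat.card A.State := by
  have hreach : ∀ g : F ⧸ Q, ∃ s, ∃ w m, ((w.map ι).prod : F ⧸ Q) = g⁻¹ ∧
      A.Path A.init m w s := by
    intro g
    obtain ⟨f, hf⟩ := QuotientGroup.mk_surjective g⁻¹
    obtain ⟨w, rfl⟩ := hgen f
    obtain ⟨m, s, h⟩ := exists_path_init hgen hacc w
    exact ⟨s, w, m, hf, h⟩
  choose state word label hword hpath using hreach
  refine K.index_ne_zero_and_le_natCard_of_inv_mul_mem state fun g g' hgg' => ?_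
  have := mul_inv_mem_terminalPathClasses_of_paths_to_same_state hgen hacc (hpath g)
    (hgg' ▸ hpath g')
  rwa [hword, hword, inv_inv, ← hK] at this

end AcceptsSubgroup

end DetMAutomaton

theorem DetMAutomaton.between_terminals_subgroup_finite_index_general
    {M : Type} [Monoid M]
    {F : Type} [Group F]
    {X : Type} (ι : X → F)
    (hgen : ∀ f : F, ∃ w : List X, (w.map ι).prod = f)
    (Q : Subgroup F) [Q.Normal] (A : DetMAutomaton M X)
    (hacc : A.Lang = {w : List X | (w.map ι).prod ∈ Q}) (hmin : A.DTSM) :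
    ∃ K : Subgroup (F ⧸ Q),
      (K : Set (F ⧸ Q)) =
        {x : F ⧸ Q | ∃ w : List X,
          (∃ m : M, ∃ p ∈ A.terminal, ∃ r ∈ A.terminal, A.Path p m w r) ∧
          (QuotientGroup.mk ((w.map ι).prod) : F ⧸ Q) = x} ∧
      K.index ≠ 0 ∧ K.index ≤ Nat.card A.State := by
  let K : Subgroup (F ⧸ Q) :=
    { carrier := A.terminalPathClasses ι Q
      one_mem' := one_mem_terminalPathClasses hacc
      mul_mem' := mul_mem_terminalPathClasses hacc hmin
      inv_mem' := inv_mem_terminalPathClasses hgen hacc hmin }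
  exact ⟨K, rfl, index_ne_zero_and_le_card_state hgen hacc K rfl⟩

/-- **Lemma 7.** Suppose `M` has unique left inverses and `A` is a DTSM deterministic
`M`-automaton accepting the normal subgroup `Q` of the free group `F` (generated as a monoid
by `X`). Let `J` be the set of words read along paths between terminal states, and let
`K = { w̄Q : w ∈ J } ⊆ F/Q`. Then `K` is a subgroup of `F/Q` of index at most the number of
states of `A`. -/
theorem DetMAutomaton.between_terminals_subgroup_finite_index
    {M : Type} [Monoid M] (hM : UniqueLeftInverses M)
    {F : Type} [Group F] [IsFreeGroup F]
    {X : Type} [Fintype X] (ι : X → F)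
    (hgen : ∀ f : F, ∃ w : List X, (w.map ι).prod = f)
    (Q : Subgroup F) [Q.Normal] (A : DetMAutomaton M X)
    (hacc : A.Lang = {w : List X | (w.map ι).prod ∈ Q}) (hmin : A.DTSM) :
    ∃ K : Subgroup (F ⧸ Q),
      (K : Set (F ⧸ Q)) =
        {x : F ⧸ Q | ∃ w : List X,
          (∃ m : M, ∃ p ∈ A.terminal, ∃ r ∈ A.terminal, A.Path p m w r) ∧
          (QuotientGroup.mk ((w.map ι).prod) : F ⧸ Q) = x} ∧
      K.index ≠ 0 ∧ K.index ≤ Nat.card A.State :=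
  DetMAutomaton.between_terminals_subgroup_finite_index_general ι hgen Q A hacc hmin
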